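/- Fix integers d_l ≥ 2, d_r ≥ 3, d_g ≥ 2 and a real β > 0. For every x with 0 < x < 1 and every β > 0, the dual potential satisfies U⊥(x, x₂⊥(x); ε⊥(x)) > 0 when (d_l, d_r, d_g) = (2, 3, 3), i.e. (writing e^{−βx₂} = exp(−β·x₂)): U⊥(x₁,x₂;ε) = 3/β − (3/β)(1−x₁)²·e^{−βx₂} − (2/β)·(1 − (1−x₁)·e^{−βx₂})³ − ε·(1 − (1−x₁)²·e^{−βx₂})³ − (6/β)·x₁(1−x₁)·e^{−βx₂} − 3·x₂(1−x₁)²·e^{−βx₂} is strictly positive at x₁ = x, x₂ = x₂⊥(x) = −(1/β)·ln((1 − √x)/(1 − x)) and ε = ε⊥(x) = x₂⊥(x) / (1 − (1−x)²·exp(−β·x₂⊥(x)))². -/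

import Mathlib

/-!
Put `s = √x`. Since `1 - x = (1 - s)(1 + s)`, the fixed point has `e^{-β x₂⊥} = 1/(1 + s)`,
i.e. `β x₂⊥ = log (1 + s)`, and the potential collapses to
`(3s - 3s² + s³ - log (1 + s) (3 - 2s - 2s² + 2s³)) / β`.
Its positivity on `0 < s < 1` follows from `log y ≤ sinh (log y) = (y - y⁻¹)/2` for `y ≥ 1`,
which turns the claim into a polynomial inequality.
-/

/-- Potential function of the dual of the `(d_l = 2, d_r = 3, d_g = 3)`
precoded-rateless code with parameter `β > 0`. -/
noncomputable def dualPotential233 (β x₁ x₂ ε : ℝ) : ℝ :=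
  3/β - (3/β) * (1 - x₁)^2 * Real.exp (-β*x₂)
    - (2/β) * (1 - (1 - x₁) * Real.exp (-β*x₂))^3
    - ε * (1 - (1 - x₁)^2 * Real.exp (-β*x₂))^3
    - (6/β) * x₁ * (1 - x₁) * Real.exp (-β*x₂)
    - 3 * x₂ * (1 - x₁)^2 * Real.exp (-β*x₂)

/-- Second coordinate of the nontrivial DE fixed points of the dual code. -/
noncomputable def x₂perp233 (β x : ℝ) : ℝ :=
  -(1/β) * Real.log ((1 - Real.sqrt x) / (1 - x))

/-- Erasure-probability coordinate of the nontrivial DE fixed points of the dual code. -/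
noncomputable def εperp233 (β x : ℝ) : ℝ :=
  x₂perp233 β x / (1 - (1 - x)^2 * Real.exp (-β * x₂perp233 β x))^2

open Real

lemma Real.log_le_sub_inv_div_two {y : ℝ} (hy : 1 ≤ y) : log y ≤ (y - y⁻¹) / 2 :=
  sinh_log (by linarith) ▸ self_le_sinh_iff.2 (log_nonneg hy)

lemma one_sub_sqrt_div_one_sub {x : ℝ} (hx0 : 0 ≤ x) (hx1 : x ≠ 1) :
    (1 - √x) / (1 - x) = (1 + √x)⁻¹ := by
  have hfactor : 1 - x = (1 - √x) * (1 + √x) := by linear_combination sq_sqrt hx0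
  have hs1 : 1 - √x ≠ 0 := fun h ↦ sub_ne_zero.2 hx1.symm (by rw [hfactor, h, zero_mul])
  rw [hfactor, div_mul_eq_div_div, div_self hs1, one_div]

lemma x₂perp233_eq (β : ℝ) {x : ℝ} (hx0 : 0 ≤ x) (hx1 : x ≠ 1) :
    x₂perp233 β x = log (1 + √x) / β := by
  rw [x₂perp233, one_sub_sqrt_div_one_sub hx0 hx1, log_inv]
  ring

lemma exp_neg_mul_x₂perp233 {β : ℝ} (hβ : β ≠ 0) {x : ℝ} (hx0 : 0 ≤ x) (hx1 : x ≠ 1) :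
    exp (-β * x₂perp233 β x) = (1 + √x)⁻¹ := by
  rw [x₂perp233_eq β hx0 hx1, neg_mul, mul_div_cancel₀ _ hβ, exp_neg,
    exp_log (by positivity)]

lemma dualPotential233_fixedPoint_eq {β : ℝ} (hβ : β ≠ 0) {x : ℝ} (hx0 : 0 ≤ x) (hx1 : x ≠ 1) :
    dualPotential233 β x (x₂perp233 β x) (εperp233 β x) =
      (3 * √x - 3 * √x ^ 2 + √x ^ 3
        - log (1 + √x) * (3 - 2 * √x - 2 * √x ^ 2 + 2 * √x ^ 3)) / β := by
  -- also when the denominator `D` of `εperp233` vanishes, as then both sides are `0`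
  have hε : ∀ a D : ℝ, a / D ^ 2 * D ^ 3 = a * D := fun a D ↦ by
    rcases eq_or_ne D 0 with rfl | hD
    · simp
    · field_simp
  have hs : 1 + √x ≠ 0 := by positivity
  rw [dualPotential233, εperp233, hε, exp_neg_mul_x₂perp233 hβ hx0 hx1,
    x₂perp233_eq β hx0 hx1]
  set s := √x
  have hx : x = s ^ 2 := (sq_sqrt hx0).symm
  rw [hx]
  field_simp
  ring

lemma log_one_add_mul_lt {s : ℝ} (hs0 : 0 < s) (hs1 : s < 1) :
    log (1 + s) * (3 - 2 * s - 2 * s ^ 2 + 2 * s ^ 3) < 3 * s - 3 * s ^ 2 + s ^ 3 := by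
  have hq : 0 < 3 - 2 * s - 2 * s ^ 2 + 2 * s ^ 3 := by nlinarith
  have hlog : log (1 + s) ≤ (s ^ 2 + 2 * s) / (2 * (1 + s)) := by
    convert log_le_sub_inv_div_two (by linarith : 1 ≤ 1 + s) using 1
    field_simp
    ring
  calc log (1 + s) * (3 - 2 * s - 2 * s ^ 2 + 2 * s ^ 3)
      ≤ (s ^ 2 + 2 * s) / (2 * (1 + s)) * (3 - 2 * s - 2 * s ^ 2 + 2 * s ^ 3) := by gcongr
    _ < 3 * s - 3 * s ^ 2 + s ^ 3 := by
      rw [div_mul_eq_mul_div, div_lt_iff₀ (by positivity)]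
      -- the gap is `s ^ 2 + 2 * s ^ 3 * (1 - s ^ 2)`
      nlinarith [mul_pos hs0 hs0, mul_pos (pow_pos hs0 3) (show 0 < 1 - s ^ 2 by nlinarith)]

theorem stmt_10 (β : ℝ) (hβ : 0 < β) (x : ℝ) (hx0 : 0 < x) (hx1 : x < 1) :
    0 < dualPotential233 β x (x₂perp233 β x) (εperp233 β x) := by
  rw [dualPotential233_fixedPoint_eq hβ.ne' hx0.le hx1.ne]
  refine div_pos (sub_pos.2 (log_one_add_mul_lt (sqrt_pos.2 hx0) ?_)) hβ
  rwa [sqrt_lt' one_pos, one_pow]
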